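/- arXiv:1704.08195 — 2 statements merged into one kernel-verified Lean document; each statement's English description precedes it below -/
import Mathlib

section
/- The union over s > 0 of the balls E_s = B((1-s)y, r(s)), with r(s) = sqrt(s(1-|y|²) + s²|y|²), equals the open half-space {x ∈ ℝⁿ : ⟨x,y⟩ < (1+|y|²)/2}. -/
/-!
Expanding `‖x - (1 - s) • y‖²` around `y` turns membership in the ball `E s` into the condition
`‖x - y‖² < s * (1 + ‖y‖² - 2⟪x, y⟫)`, linear in `s`. As the left side is nonnegative, some
`s > 0` satisfies it exactly when the bracket is positive.
-/

open scoped RealInnerProductSpace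

lemma mem_ball_smul_sqrt_iff {F : Type*} [NormedAddCommGroup F] [InnerProductSpace ℝ F]
    (x y : F) (s : ℝ) :
    x ∈ Metric.ball ((1 - s) • y) (Real.sqrt (s * (1 - ‖y‖ ^ 2) + s ^ 2 * ‖y‖ ^ 2)) ↔
      ‖x - y‖ ^ 2 < s * (1 + ‖y‖ ^ 2 - 2 * ⟪x, y⟫) := by
  have hexpand : ‖x - (1 - s) • y‖ ^ 2 = ‖x - y‖ ^ 2 + 2 * s * ⟪x - y, y⟫ + s ^ 2 * ‖y‖ ^ 2 := by
    rw [show x - (1 - s) • y = (x - y) + s • y by module, norm_add_sq_real,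
      real_inner_smul_right, norm_smul, mul_pow, Real.norm_eq_abs, sq_abs]
    ring
  rw [Metric.mem_ball, dist_eq_norm, Real.lt_sqrt (norm_nonneg _), hexpand, inner_sub_left,
    real_inner_self_eq_norm_sq]
  constructor <;> intro h <;> linarith

lemma exists_pos_lt_mul_iff {a b : ℝ} (ha : 0 ≤ a) : (∃ s, 0 < s ∧ a < s * b) ↔ 0 < b := by
  constructor
  · rintro ⟨s, hs, hab⟩
    exact pos_of_mul_pos_right (ha.trans_lt hab) hs.le
  · intro hb
    refine ⟨(a + 1) / b, by positivity, ?_⟩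
    rw [div_mul_cancel₀ _ hb.ne']
    linarith

theorem stmt_7_general (n : ℕ) (y : EuclideanSpace ℝ (Fin n))
    (r : ℝ → ℝ) (hr : ∀ s, r s = Real.sqrt (s * (1 - ‖y‖ ^ 2) + s ^ 2 * ‖y‖ ^ 2))
    (E : ℝ → Set (EuclideanSpace ℝ (Fin n)))
    (hE : ∀ s, E s = Metric.ball ((1 - s) • y) (r s)) :
    (⋃ s ∈ Set.Ioi (0 : ℝ), E s)
      = {x : EuclideanSpace ℝ (Fin n) | ⟪x, y⟫ < (1 + ‖y‖ ^ 2) / 2} := by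
  ext x
  simp only [Set.mem_iUnion, Set.mem_Ioi, exists_prop, hE, hr, mem_ball_smul_sqrt_iff,
    Set.mem_ofPred_eq]
  rw [exists_pos_lt_mul_iff (sq_nonneg _)]
  constructor <;> intro h <;> linarith

theorem stmt_7 (n : ℕ) (y : EuclideanSpace ℝ (Fin n)) (hy : ‖y‖ < 1)
    (r : ℝ → ℝ) (hr : ∀ s, r s = Real.sqrt (s * (1 - ‖y‖ ^ 2) + s ^ 2 * ‖y‖ ^ 2))
    (E : ℝ → Set (EuclideanSpace ℝ (Fin n)))
    (hE : ∀ s, E s = Metric.ball ((1 - s) • y) (r s)) :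
    (⋃ s ∈ Set.Ioi (0 : ℝ), E s)
      = {x : EuclideanSpace ℝ (Fin n) | ⟪x, y⟫ < (1 + ‖y‖ ^ 2) / 2} :=
  stmt_7_general n y r hr E hE
end

section
/- Let q ≥ 1 and y ∈ ℝᵐ with q|y|² < 1. On the open set where f_q is smooth and positive, the gradient of f_q (the function whose level set {f_q = s} is the sphere |x - sy|² = s(1-q|y|²)+s²q|y|²) satisfies ∇f_q(x)/2 = f_q(x)·(x - f_q(x)y)/(|x|² + (q-1)f_q(x)²|y|²), and consequently |∇f_q(x)| = 2 f_q(x) R_q(f_q(x))/(|x|² + (q-1)f_q(x)²|y|²), where R_q(s) = sqrt(s(1-q|y|²)+s²q|y|²). -/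
open scoped RealInnerProductSpace

/-!
Differentiating the level relation `‖z - f z • y‖² = a f z + b (f z)²` at `x` (implicit
differentiation) gives `B • ∇f x = 2 • (x - f x • y)` with
`B = a + 2 b f x + 2 ⟪x - f x • y, y⟫`. Expanding the level relation at `x` itself shows
`f x * B = ‖x‖² + (b - ‖y‖²) (f x)²`, which for `a = 1 - q‖y‖²`, `b = q‖y‖²` is the stated
denominator; it is positive because `q ≥ 1` and `x = 0` is incompatible with the level relation.
Finally `‖x - f x • y‖ = R (f x)` by the level relation again.
-/

open Filter Topology

section SphereLevel

variable {E : Type*} [NormedAddCommGroup E] [InnerProductSpace ℝ E]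

theorem mul_sphere_level_coeff_eq {x y : E} {a b s : ℝ}
    (h : ‖x - s • y‖ ^ 2 = a * s + b * s ^ 2) :
    s * (a + 2 * b * s + 2 * ⟪x - s • y, y⟫) = ‖x‖ ^ 2 + (b - ‖y‖ ^ 2) * s ^ 2 := by
  rw [norm_sub_sq_real, real_inner_smul_right, norm_smul, mul_pow, Real.norm_eq_abs,
    sq_abs] at h
  rw [inner_sub_left, real_inner_smul_left, real_inner_self_eq_norm_sq]
  linear_combination -h

theorem sphere_level_denom_pos {x y : E} {q s : ℝ} (hq : 1 ≤ q) (hy : q * ‖y‖ ^ 2 < 1)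
    (hs : 0 < s)
    (hlevel : ‖x - s • y‖ ^ 2 = s * (1 - q * ‖y‖ ^ 2) + s ^ 2 * q * ‖y‖ ^ 2) :
    0 < ‖x‖ ^ 2 + (q - 1) * s ^ 2 * ‖y‖ ^ 2 := by
  have hterm : 0 ≤ (q - 1) * s ^ 2 * ‖y‖ ^ 2 := by
    have := sub_nonneg.2 hq
    positivity
  rcases eq_or_ne x 0 with rfl | hx
  · rw [zero_sub, norm_neg, norm_smul, mul_pow, Real.norm_eq_abs, sq_abs] at hlevel
    nlinarith [mul_pos hs (sub_pos.2 hy)]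
  · have := norm_pos_iff.2 hx
    positivity

variable {g : E → ℝ} {x y : E} {a b : ℝ}

theorem fderiv_mul_eq_of_sphere_level (hg : DifferentiableAt ℝ g x)
    (hlevel : ∀ᶠ z in 𝓝 x, ‖z - g z • y‖ ^ 2 = a * g z + b * g z ^ 2) (v : E) :
    (a + 2 * b * g x + 2 * ⟪x - g x • y, y⟫) * fderiv ℝ g x v = 2 * ⟪x - g x • y, v⟫ := by
  have hlhs := ((hasFDerivAt_id x).sub (hg.hasFDerivAt.smul_const y)).norm_sq
  have hrhs := (hg.hasFDerivAt.const_mul a).add ((hg.hasFDerivAt.pow 2).const_mul b)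
  have h := congrArg (· v)
    ((hlhs.congr_of_eventuallyEq (hlevel.mono fun _ => Eq.symm)).unique hrhs)
  simp only [Pi.sub_apply, id_eq, map_sub, map_smul, ContinuousLinearMap.comp_sub,
    ContinuousLinearMap.comp_id, ContinuousLinearMap.sub_comp, ContinuousLinearMap.smul_comp,
    smul_apply, sub_apply, coe_innerSL_apply, smul_eq_mul,
    ContinuousLinearMap.comp_apply, ContinuousLinearMap.smulRight_apply,
    real_inner_self_eq_norm_sq, nsmul_eq_mul, Nat.cast_ofNat, Nat.add_one_sub_one, pow_one,
    add_apply] at h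
  simp only [inner_sub_left, real_inner_smul_left, real_inner_self_eq_norm_sq]
  linear_combination -h

theorem gradient_eq_of_sphere_level [CompleteSpace E] (hg : DifferentiableAt ℝ g x)
    (hlevel : ∀ᶠ z in 𝓝 x, ‖z - g z • y‖ ^ 2 = a * g z + b * g z ^ 2)
    (hD : ‖x‖ ^ 2 + (b - ‖y‖ ^ 2) * g x ^ 2 ≠ 0) :
    gradient g x = (2 * g x / (‖x‖ ^ 2 + (b - ‖y‖ ^ 2) * g x ^ 2)) • (x - g x • y) := by
  rw [← mul_sphere_level_coeff_eq hlevel.self_of_nhds] at hD ⊢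
  have hs : g x ≠ 0 := left_ne_zero_of_mul hD
  have hB : a + 2 * b * g x + 2 * ⟪x - g x • y, y⟫ ≠ 0 := right_ne_zero_of_mul hD
  refine ext_inner_right ℝ fun v => ?_
  rw [inner_gradient_left, real_inner_smul_left, mul_comm 2 (g x), mul_div_mul_left _ _ hs,
    div_mul_eq_mul_div, eq_div_iff hB, mul_comm, fderiv_mul_eq_of_sphere_level hg hlevel v]

end SphereLevel

theorem stmt_15_general (m : ℕ) (q : ℝ) (hq : 1 ≤ q)
    (y : EuclideanSpace ℝ (Fin m)) (hy : q * ‖y‖ ^ 2 < 1)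
    (U : Set (EuclideanSpace ℝ (Fin m))) (hU : IsOpen U)
    (f : EuclideanSpace ℝ (Fin m) → ℝ)
    (hfsmooth : ContDiffOn ℝ 1 f U) (hfpos : ∀ x ∈ U, 0 < f x)
    (hlevel : ∀ x ∈ U,
      ‖x - f x • y‖ ^ 2 = f x * (1 - q * ‖y‖ ^ 2) + (f x) ^ 2 * q * ‖y‖ ^ 2)
    (R : ℝ → ℝ) (hR : ∀ s, R s = Real.sqrt (s * (1 - q * ‖y‖ ^ 2) + s ^ 2 * q * ‖y‖ ^ 2))
    (x : EuclideanSpace ℝ (Fin m)) (hx : x ∈ U) :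
    (1 / 2 : ℝ) • gradient f x
        = (f x / (‖x‖ ^ 2 + (q - 1) * (f x) ^ 2 * ‖y‖ ^ 2)) • (x - f x • y) ∧
      ‖gradient f x‖
        = 2 * f x * R (f x) / (‖x‖ ^ 2 + (q - 1) * (f x) ^ 2 * ‖y‖ ^ 2) := by
  have hdiff : DifferentiableAt ℝ f x :=
    (hfsmooth.contDiffAt (hU.mem_nhds hx)).differentiableAt one_ne_zero
  have hlevel' : ∀ᶠ z in 𝓝 x,
      ‖z - f z • y‖ ^ 2 = (1 - q * ‖y‖ ^ 2) * f z + q * ‖y‖ ^ 2 * f z ^ 2 :=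
    eventually_of_mem (hU.mem_nhds hx) fun z hz => by rw [hlevel z hz]; ring
  have hD := sphere_level_denom_pos hq hy (hfpos x hx) (hlevel x hx)
  have hgrad : gradient f x
      = (2 * f x / (‖x‖ ^ 2 + (q - 1) * f x ^ 2 * ‖y‖ ^ 2)) • (x - f x • y) := by
    rw [show (q - 1) * f x ^ 2 * ‖y‖ ^ 2 = (q * ‖y‖ ^ 2 - ‖y‖ ^ 2) * f x ^ 2 by ring] at hD ⊢
    exact gradient_eq_of_sphere_level hdiff hlevel' hD.ne'
  have hRf : R (f x) = ‖x - f x • y‖ := by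
    rw [hR, ← hlevel x hx, Real.sqrt_sq (norm_nonneg _)]
  refine ⟨?_, ?_⟩
  · rw [hgrad, smul_smul]
    ring_nf
  · rw [hgrad, norm_smul, Real.norm_eq_abs, abs_of_pos (by have := hfpos x hx; positivity), hRf]
    ring

theorem stmt_15 (m : ℕ) (hm : 1 ≤ m) (q : ℝ) (hq : 1 ≤ q)
    (y : EuclideanSpace ℝ (Fin m)) (hy : q * ‖y‖ ^ 2 < 1)
    (U : Set (EuclideanSpace ℝ (Fin m))) (hU : IsOpen U)
    (f : EuclideanSpace ℝ (Fin m) → ℝ)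
    (hfsmooth : ContDiffOn ℝ 1 f U) (hfpos : ∀ x ∈ U, 0 < f x)
    (hlevel : ∀ x ∈ U,
      ‖x - f x • y‖ ^ 2 = f x * (1 - q * ‖y‖ ^ 2) + (f x) ^ 2 * q * ‖y‖ ^ 2)
    (R : ℝ → ℝ) (hR : ∀ s, R s = Real.sqrt (s * (1 - q * ‖y‖ ^ 2) + s ^ 2 * q * ‖y‖ ^ 2))
    (x : EuclideanSpace ℝ (Fin m)) (hx : x ∈ U) :
    (1 / 2 : ℝ) • gradient f x
        = (f x / (‖x‖ ^ 2 + (q - 1) * (f x) ^ 2 * ‖y‖ ^ 2)) • (x - f x • y) ∧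
      ‖gradient f x‖
        = 2 * f x * R (f x) / (‖x‖ ^ 2 + (q - 1) * (f x) ^ 2 * ‖y‖ ^ 2) :=
  stmt_15_general m q hq y hy U hU f hfsmooth hfpos hlevel R hR x hx
end
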